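/- Let X be a complex topological vector space, ι an index set, T : ι → B(X) a family of continuous linear operators, and c, k : ι → ℝ families of strictly positive real numbers with c(i) ≤ k(i) for all i ∈ ι. If x ∈ X is a diskcyclic vector for the set {c(i) · T(i) : i ∈ ι}, then x is a diskcyclic vector for the set {k(i) · T(i) : i ∈ ι}; in particular, if {c(i) · T(i) : i ∈ ι} is diskcyclic then so is {k(i) · T(i) : i ∈ ι}. -/

import Mathlib

/-- The paper's `𝔻Orb(Γ, x)` is `diskOrbit ℂ (fun i => T i x)` for `Γ = {T i : i ∈ ι}`. -/
def diskOrbit (𝕜 : Type*) {M ι : Type*} [Norm 𝕜] [SMul 𝕜 M] (v : ι → M) : Set M :=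
  {y | ∃ α : 𝕜, ‖α‖ ≤ 1 ∧ ∃ i, y = α • v i}

/-- `α • a • v = (α * (a / b)) • b • v` with `‖α * (a / b)‖ ≤ 1`; when `b = 0` also `a = 0`,
and both sides are `0 • v`. -/
theorem diskOrbit_smul_subset_of_norm_le {𝕜 M ι : Type*} [NormedDivisionRing 𝕜]
    [MulAction 𝕜 M] (v : ι → M) {a b : ι → 𝕜} (hab : ∀ i, ‖a i‖ ≤ ‖b i‖) :
    diskOrbit 𝕜 (fun i => a i • v i) ⊆ diskOrbit 𝕜 (fun i => b i • v i) := by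
  rintro y ⟨α, hα, i, rfl⟩
  refine ⟨α * (a i / b i), ?_, i, ?_⟩
  · have hquot : ‖a i / b i‖ ≤ 1 := by
      rw [norm_div]
      exact div_le_one_of_le₀ (hab i) (norm_nonneg _)
    simpa only [norm_mul, mul_one] using mul_le_mul hα hquot (norm_nonneg _) zero_le_one
  · rw [smul_smul, smul_smul, mul_assoc]
    rcases eq_or_ne (b i) 0 with hb | hb
    · have ha : a i = 0 := norm_le_zero_iff.mp (by simpa only [hb, norm_zero] using hab i)
      simp only [ha, hb, zero_div, mul_zero]
    · rw [div_mul_cancel₀ _ hb]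

theorem stmt_3_general {X : Type*} [AddCommGroup X] [Module ℂ X] [TopologicalSpace X]
    [IsTopologicalAddGroup X] [ContinuousSMul ℂ X] {ι : Type*}
    (T : ι → X →L[ℂ] X) (c k : ι → ℝ)
    (hc : ∀ i, 0 < c i) (hck : ∀ i, c i ≤ k i) :
    (∀ x : X, Dense {y : X | ∃ α : ℂ, ‖α‖ ≤ 1 ∧ ∃ i : ι, y = α • (c i : ℂ) • T i x} →
      Dense {y : X | ∃ α : ℂ, ‖α‖ ≤ 1 ∧ ∃ i : ι, y = α • (k i : ℂ) • T i x}) ∧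
    ((∃ x : X, Dense {y : X | ∃ α : ℂ, ‖α‖ ≤ 1 ∧ ∃ i : ι, y = α • (c i : ℂ) • T i x}) →
      ∃ x : X, Dense {y : X | ∃ α : ℂ, ‖α‖ ≤ 1 ∧ ∃ i : ι, y = α • (k i : ℂ) • T i x}) := by
  have hnorm (i : ι) : ‖(c i : ℂ)‖ ≤ ‖(k i : ℂ)‖ := by
    rw [Complex.norm_of_nonneg (hc i).le, Complex.norm_of_nonneg ((hc i).le.trans (hck i))]
    exact hck i
  have horbit (x : X) :
      diskOrbit ℂ (fun i => (c i : ℂ) • T i x) ⊆ diskOrbit ℂ (fun i => (k i : ℂ) • T i x) :=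
    diskOrbit_smul_subset_of_norm_le (fun i => T i x) hnorm
  exact ⟨fun x hx => hx.mono (horbit x), fun ⟨x, hx⟩ => ⟨x, hx.mono (horbit x)⟩⟩

/-- If `x` is a diskcyclic vector for `{c i • T i : i ∈ ι}` with `0 < c i ≤ k i`, then
`x` is a diskcyclic vector for `{k i • T i : i ∈ ι}`; in particular if the former set is
diskcyclic then so is the latter. -/
theorem stmt_3 {X : Type*} [AddCommGroup X] [Module ℂ X] [TopologicalSpace X]
    [IsTopologicalAddGroup X] [ContinuousSMul ℂ X] {ι : Type*}
    (T : ι → X →L[ℂ] X) (c k : ι → ℝ)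
    (hc : ∀ i, 0 < c i) (hk : ∀ i, 0 < k i) (hck : ∀ i, c i ≤ k i) :
    (∀ x : X, Dense {y : X | ∃ α : ℂ, ‖α‖ ≤ 1 ∧ ∃ i : ι, y = α • (c i : ℂ) • T i x} →
      Dense {y : X | ∃ α : ℂ, ‖α‖ ≤ 1 ∧ ∃ i : ι, y = α • (k i : ℂ) • T i x}) ∧
    ((∃ x : X, Dense {y : X | ∃ α : ℂ, ‖α‖ ≤ 1 ∧ ∃ i : ι, y = α • (c i : ℂ) • T i x}) →
      ∃ x : X, Dense {y : X | ∃ α : ℂ, ‖α‖ ≤ 1 ∧ ∃ i : ι, y = α • (k i : ℂ) • T i x}) :=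
  stmt_3_general T c k hc hck
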